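/- Let W be a real k×k matrix. If |tr(W)| = ∑_{i=1}^k σ_i(W), where σ_1(W), …, σ_k(W) are the singular values of W, then W is symmetric and is either positive semidefinite or negative semidefinite. -/

import Mathlib

/-! Conjugating `W` by the eigenvector matrix `Q` of `WᵀW` gives a matrix `A = QᵀWQ` whose
columns are orthogonal, the `i`-th one of length `σᵢ(W)`. Hence `Aᵢᵢ ≤ σᵢ(W)`, and
`tr W = tr A ≤ ∑ σᵢ(W)`, with equality only if every column of `A` is `σᵢ(W)` times the `i`-th
unit vector. Then `A` is a nonnegative diagonal matrix and `W = QAQᵀ` is positive semidefinite.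
For `tr W < 0` apply this to `-W`, which has the same singular values. -/

open Matrix

/-- `Wᵀ * W` is Hermitian (over `ℝ`, the conjugate transpose is the transpose). -/
lemma transpose_mul_self_isHermitian {m k : ℕ} (W : Matrix (Fin m) (Fin k) ℝ) :
    (Wᵀ * W).IsHermitian := by
  simpa [Matrix.conjTranspose_eq_transpose_of_trivial] using
    Matrix.isHermitian_conjTranspose_mul_self W

/-- The singular values of a real matrix `W`: the square roots of the eigenvalues of `WᵀW`,
counted with multiplicity. -/
noncomputable def singularValues {m k : ℕ} (W : Matrix (Fin m) (Fin k) ℝ) : Fin k → ℝ :=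
  fun i => Real.sqrt ((transpose_mul_self_isHermitian W).eigenvalues i)

lemma le_sqrt_sum_sq {n : Type*} [Fintype n] (v : n → ℝ) (i : n) :
    v i ≤ √(∑ j, v j ^ 2) :=
  Real.le_sqrt_of_sq_le (Finset.single_le_sum (fun j _ => sq_nonneg (v j)) (Finset.mem_univ i))

lemma eq_zero_of_sqrt_sum_sq_le {n : Type*} [Fintype n] {v : n → ℝ} {i : n}
    (h : √(∑ j, v j ^ 2) ≤ v i) {j : n} (hj : j ≠ i) : v j = 0 := by
  classical
  have hvi : 0 ≤ v i := (Real.sqrt_nonneg _).trans h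
  have hsum : ∑ j, v j ^ 2 ≤ v i ^ 2 := (Real.sqrt_le_left hvi).mp h
  rw [← Finset.add_sum_erase _ _ (Finset.mem_univ i)] at hsum
  have hrest : ∑ l ∈ Finset.univ.erase i, v l ^ 2 = 0 :=
    le_antisymm (by linarith) (Finset.sum_nonneg fun l _ => sq_nonneg (v l))
  exact pow_eq_zero_iff two_ne_zero |>.mp <|
    (Finset.sum_eq_zero_iff_of_nonneg fun l _ => sq_nonneg (v l)).mp hrest j
      (Finset.mem_erase.mpr ⟨hj, Finset.mem_univ j⟩)

namespace Matrix

variable {n : Type*} [Fintype n] [DecidableEq n]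

lemma eq_diagonal_sqrt_of_transpose_mul_self_eq_diagonal {A : Matrix n n ℝ} {d : n → ℝ}
    (hA : Aᵀ * A = diagonal d) (htr : ∑ i, √(d i) ≤ trace A) :
    A = diagonal fun i => √(d i) := by
  have hcol (i : n) : ∑ j, A j i ^ 2 = d i := by
    simpa [mul_apply, sq] using congrFun (congrFun hA i) i
  have hle (i : n) : A i i ≤ √(d i) := hcol i ▸ le_sqrt_sum_sq (fun j => A j i) i
  have hdiag (i : n) : A i i = √(d i) :=
    (Finset.sum_eq_sum_iff_of_le fun i _ => hle i).mp
      (le_antisymm (Finset.sum_le_sum fun i _ => hle i) htr) i (Finset.mem_univ i)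
  ext i j
  rcases eq_or_ne i j with rfl | hij
  · simp [hdiag]
  · rw [diagonal_apply_ne _ hij]
    exact eq_zero_of_sqrt_sum_sq_le (v := fun l => A l j) ((hcol j).symm ▸ (hdiag j).ge) hij

lemma trace_conjStarAlgAut {R : Type*} [CommSemiring R] [StarRing R]
    (u : unitary (Matrix n n R)) (A : Matrix n n R) :
    trace (Unitary.conjStarAlgAut R _ u A) = trace A := by
  rw [Unitary.conjStarAlgAut_apply, trace_mul_cycle, Unitary.coe_star_mul_self, one_mul]

end Matrix

lemma singularValues_neg {k : ℕ} (W : Matrix (Fin k) (Fin k) ℝ) :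
    singularValues (-W) = singularValues W := by
  unfold singularValues
  simp only [transpose_neg, neg_mul_neg]

lemma posSemidef_of_sum_singularValues_le_trace {k : ℕ} (W : Matrix (Fin k) (Fin k) ℝ)
    (h : ∑ i, singularValues W i ≤ trace W) : W.PosSemidef := by
  set hB := transpose_mul_self_isHermitian W
  set Q := hB.eigenvectorUnitary
  set A := Unitary.conjStarAlgAut ℝ _ (star Q) W
  have hAA : Aᵀ * A = diagonal hB.eigenvalues := by
    have hAt : Aᵀ = Unitary.conjStarAlgAut ℝ _ (star Q) Wᵀ := by
      simpa only [star_eq_conjTranspose, conjTranspose_eq_transpose_of_trivial]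
        using (map_star (Unitary.conjStarAlgAut ℝ _ (star Q)) W).symm
    rw [hAt, ← map_mul]
    exact hB.conjStarAlgAut_star_eigenvectorUnitary
  have hA : A = diagonal (singularValues W) :=
    eq_diagonal_sqrt_of_transpose_mul_self_eq_diagonal hAA (by rwa [trace_conjStarAlgAut])
  have hW : W = Unitary.conjStarAlgAut ℝ _ Q A := by
    rw [← Unitary.conjStarAlgAut_mul_apply, Unitary.mul_star_self, map_one, StarAlgEquiv.one_apply]
  rw [hW, hA, Unitary.conjStarAlgAut_apply]
  exact (posSemidef_diagonal_iff.mpr fun i => Real.sqrt_nonneg _).mul_mul_conjTranspose_same _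

theorem isSymm_and_semidef_of_abs_trace_eq_sum_singularValues
    (k : ℕ) (W : Matrix (Fin k) (Fin k) ℝ)
    (h : |Matrix.trace W| = ∑ i, singularValues W i) :
    W.IsSymm ∧ (W.PosSemidef ∨ (-W).PosSemidef) := by
  rcases le_or_gt 0 (trace W) with htr | htr
  · have hW : W.PosSemidef :=
      posSemidef_of_sum_singularValues_le_trace W (by rw [← h, abs_of_nonneg htr])
    exact ⟨isHermitian_iff_isSymm.mp hW.isHermitian, Or.inl hW⟩
  · have hW : (-W).PosSemidef :=
      posSemidef_of_sum_singularValues_le_trace (-W)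
        (by rw [singularValues_neg, trace_neg, ← h, abs_of_neg htr])
    exact ⟨isSymm_neg_iff.mp (isHermitian_iff_isSymm.mp hW.isHermitian), Or.inr hW⟩
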